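/- arXiv:1111.0779 — 7 statements merged into one kernel-verified Lean document; each statement's English description precedes it below -/
import Mathlib

section
/- Let K be a field. For each integer m, let P_m, A_m, B_m, L_m, L'_m be K-vector spaces with K-linear maps a_m : P_m → A_m, b_m : A_m → B_m, c_m : B_m → P_{m+1}, d_m : B_m → L_m, N_m : L_m → L'_m, e_m : L'_m → B_{m+1}. Assume: (LES1) the sequence ⋯ → P_m →(a_m) A_m →(b_m) B_m →(c_m) P_{m+1} → ⋯ is exact, i.e. for all m, range a_m = ker b_m, range b_m = ker c_m, and range c_m = ker a_{m+1}; (LES2) the sequence ⋯ → B_m →(d_m) L_m →(N_m) L'_m →(e_m) B_{m+1} → ⋯ is exact, i.e. for all m, range e_{m-1} = ker d_m, range d_m = ker N_m, and range N_m = ker e_m; (DS) for every m, B_m is the internal direct sum of range b_m and range e_{m-1}, i.e. range b_m + range e_{m-1} = B_m and range b_m ∩ range e_{m-1} = 0. Define γ_m = d_m ∘ b_m and δ_m = c_{m+1} ∘ e_m. Then the spliced sequence ⋯ → P_m →(a_m) A_m →(γ_m) L_m →(N_m) L'_m →(δ_m) P_{m+2} →(a_{m+2}) A_{m+2} → ⋯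 is exact; that is, for every m: ker γ_m = range a_m, ker N_m = range γ_m, ker δ_m = range N_m, and ker a_{m+2} = range δ_m. -/
/-!
Exactness of the spliced sequence at `A` and `L` comes from the direct sum decomposition
`B m = range b ⊕ range e = range b ⊕ ker d`: since `range b ∩ ker d = 0`, composing `b` with `d`
does not enlarge the kernel, and since `range b + ker d = B m`, it does not shrink the image.
Symmetrically `B (m + 1) = range e ⊕ ker c` gives exactness at `L'` and `P`.
-/

namespace LinearMap

variable {R M N Q : Type*} [Semiring R] [AddCommMonoid M] [AddCommMonoid N] [AddCommMonoid Q]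
  [Module R M] [Module R N] [Module R Q]

theorem ker_comp_eq_of_disjoint {f : M →ₗ[R] N} {g : N →ₗ[R] Q}
    (h : Disjoint (range f) (ker g)) : ker (g ∘ₗ f) = ker f :=
  le_antisymm (fun x hx => disjoint_iff_inf_le.mp h ⟨⟨x, rfl⟩, hx⟩) (ker_le_ker_comp f g)

theorem range_comp_eq_of_codisjoint {f : M →ₗ[R] N} {g : N →ₗ[R] Q}
    (h : Codisjoint (range f) (ker g)) : range (g ∘ₗ f) = range g := by
  rw [range_comp, range_eq_map g, ← h.eq_top, Submodule.map_sup, le_ker_iff_map.mp le_rfl,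
    sup_bot_eq]

end LinearMap

open LinearMap

/-- The spliced Clemens–Schmid long exact sequence: given two long exact sequences
`⋯ → P m → A m → B m → P (m+1) → ⋯` and `⋯ → B m → L m → L' m → B (m+1) → ⋯`
such that each `B m` is the internal direct sum of the images coming from the two
sequences, the spliced sequence
`⋯ → P m → A m → L m → L' m → P (m+2) → A (m+2) → ⋯` is exact. -/
theorem clemens_schmid_splice {K : Type*} [Field K]
    (P A B L L' : ℤ → Type*)
    [∀ m, AddCommGroup (P m)] [∀ m, Module K (P m)]
    [∀ m, AddCommGroup (A m)] [∀ m, Module K (A m)]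
    [∀ m, AddCommGroup (B m)] [∀ m, Module K (B m)]
    [∀ m, AddCommGroup (L m)] [∀ m, Module K (L m)]
    [∀ m, AddCommGroup (L' m)] [∀ m, Module K (L' m)]
    (a : ∀ m, P m →ₗ[K] A m) (b : ∀ m, A m →ₗ[K] B m)
    (c : ∀ m, B m →ₗ[K] P (m + 1))
    (d : ∀ m, B m →ₗ[K] L m) (N : ∀ m, L m →ₗ[K] L' m)
    (e : ∀ m, L' m →ₗ[K] B (m + 1))
    -- (LES1)
    (hab : ∀ m, LinearMap.range (a m) = LinearMap.ker (b m))
    (hbc : ∀ m, LinearMap.range (b m) = LinearMap.ker (c m))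
    (hca : ∀ m, LinearMap.range (c m) = LinearMap.ker (a (m + 1)))
    -- (LES2)
    (hed : ∀ m, LinearMap.range (e m) = LinearMap.ker (d (m + 1)))
    (hdN : ∀ m, LinearMap.range (d m) = LinearMap.ker (N m))
    (hNe : ∀ m, LinearMap.range (N m) = LinearMap.ker (e m))
    -- (DS)
    (hsum : ∀ m, LinearMap.range (b (m + 1)) ⊔ LinearMap.range (e m) = ⊤)
    (hint : ∀ m, LinearMap.range (b (m + 1)) ⊓ LinearMap.range (e m) = ⊥) :
    ∀ m : ℤ,
      LinearMap.ker ((d m).comp (b m)) = LinearMap.range (a m) ∧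
      LinearMap.ker (N m) = LinearMap.range ((d m).comp (b m)) ∧
      LinearMap.ker ((c (m + 1)).comp (e m)) = LinearMap.range (N m) ∧
      LinearMap.ker (a (m + 1 + 1)) = LinearMap.range ((c (m + 1)).comp (e m)) := by
  intro m
  -- (DS) is indexed so that it speaks about `B (n + 1)`, and `B (m - 1 + 1)` is not `B m`
  obtain ⟨n, rfl⟩ : ∃ n : ℤ, n + 1 = m := ⟨m - 1, by omega⟩
  have hb_ker_d : IsCompl (range (b (n + 1))) (ker (d (n + 1))) := by
    rw [← hed]
    exact .of_eq (hint n) (hsum n)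
  have he_ker_c : IsCompl (range (e (n + 1))) (ker (c (n + 1 + 1))) := by
    rw [← hbc]
    exact (IsCompl.of_eq (hint (n + 1)) (hsum (n + 1))).symm
  refine ⟨?_, ?_, ?_, ?_⟩
  · rw [ker_comp_eq_of_disjoint hb_ker_d.disjoint, hab]
  · rw [range_comp_eq_of_codisjoint hb_ker_d.codisjoint, hdN]
  · rw [ker_comp_eq_of_disjoint he_ker_c.disjoint, hNe]
  · rw [range_comp_eq_of_codisjoint he_ker_c.codisjoint, hca]
end

section
/- Let K be a field and let A, B, C be K-vector spaces equipped with families of subspaces (A_j)_{j∈ℤ}, (B_j)_{j∈ℤ}, (C_j)_{j∈ℤ} each forming an internal direct sum decomposition: A = ⊕_j A_j, B = ⊕_j B_j, C = ⊕_j C_j. Let f : A → B and g : B → C be K-linear maps with f(A_j) ⊆ B_j and g(B_j) ⊆ C_j for all j, and assume range f = ker g. Let S ⊆ ℤ be a set of integers such that A_j = 0 for all j ∉ S and C_j = 0 for all j ∈ S. Then range f = ker g = ⊕_{j∈S} B_j (the supremum of the subspaces B_j for j ∈ S). -/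
/-- The weight argument: if `f : A → B` and `g : B → C` are graded linear maps between
vector spaces with internal direct sum decompositions indexed by `ℤ`, `range f = ker g`,
the grading of `A` is concentrated in a set `S` and the grading of `C` vanishes on `S`,
then `range f = ker g = ⊕_{j ∈ S} B j`. -/
theorem range_eq_ker_eq_iSup_of_graded {K VA VB VC : Type*} [Field K]
    [AddCommGroup VA] [Module K VA] [AddCommGroup VB] [Module K VB]
    [AddCommGroup VC] [Module K VC]
    (A : ℤ → Submodule K VA) (B : ℤ → Submodule K VB) (C : ℤ → Submodule K VC)
    (hAindep : iSupIndep A) (hAsup : ⨆ j, A j = ⊤)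
    (hBindep : iSupIndep B) (hBsup : ⨆ j, B j = ⊤)
    (hCindep : iSupIndep C) (hCsup : ⨆ j, C j = ⊤)
    (f : VA →ₗ[K] VB) (g : VB →ₗ[K] VC)
    (hf : ∀ j, (A j).map f ≤ B j) (hg : ∀ j, (B j).map g ≤ C j)
    (hex : LinearMap.range f = LinearMap.ker g)
    (S : Set ℤ) (hAS : ∀ j ∉ S, A j = ⊥) (hCS : ∀ j ∈ S, C j = ⊥) :
    LinearMap.range f = ⨆ j ∈ S, B j ∧ LinearMap.ker g = ⨆ j ∈ S, B j := by
  have h1 : LinearMap.range f ≤ ⨆ j ∈ S, B j := by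
    rw [LinearMap.range_eq_map, ← hAsup, Submodule.map_iSup]
    apply iSup_le; intro j
    by_cases hj : j ∈ S
    · exact le_trans (hf j) (le_iSup₂ (f := fun j _ => B j) j hj)
    · rw [hAS j hj, Submodule.map_bot]; exact bot_le
  have h2 : ⨆ j ∈ S, B j ≤ LinearMap.ker g := by
    apply iSup₂_le; intro j hj x hx
    have : g x ∈ C j := hg j ⟨x, hx, rfl⟩
    rw [hCS j hj] at this
    exact this
  have h : LinearMap.range f = ⨆ j ∈ S, B j := le_antisymm h1 (hex ▸ h2)
  exact ⟨h, hex ▸ h⟩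
end

section
/- Let K be a field, V a finite-dimensional K-vector space, N : V → V a nilpotent K-linear endomorphism, and (M_j)_{j∈ℤ} a monodromy filtration for N. Then for every integer j ≤ -1 one has N(M_{j+2}) = M_j. -/
/-- A monodromy filtration for a nilpotent endomorphism `N` of a vector space `V`:
an increasing, exhaustive and separated filtration `M` indexed by `ℤ` with
`N (M j) ⊆ M (j - 2)`, such that for every `j ≥ 1` the map induced by `N ^ j` gives an
isomorphism `M j / M (j-1) ≅ M (-j) / M (-j-1)`. -/
def IsMonodromyFiltration {K V : Type*} [Field K] [AddCommGroup V] [Module K V]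
    (N : V →ₗ[K] V) (M : ℤ → Submodule K V) : Prop :=
  (∀ j : ℤ, M j ≤ M (j + 1)) ∧
  (∃ a : ℤ, ∀ j : ℤ, j ≤ a → M j = ⊥) ∧
  (∃ b : ℤ, ∀ j : ℤ, b ≤ j → M j = ⊤) ∧
  (∀ j : ℤ, (M j).map N ≤ M (j - 2)) ∧
  (∀ j : ℕ, 1 ≤ j →
    (∀ x : V, x ∈ M (j : ℤ) → (N ^ j) x ∈ M (-(j : ℤ))) ∧
    (∀ x : V, x ∈ M (j : ℤ) → (N ^ j) x ∈ M (-(j : ℤ) - 1) → x ∈ M ((j : ℤ) - 1)) ∧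
    (∀ y : V, y ∈ M (-(j : ℤ)) → ∃ x ∈ M (j : ℤ), (N ^ j) x - y ∈ M (-(j : ℤ) - 1)))

/-!
For `j ≤ -1`, the surjectivity of `N ^ (-j) : M (-j) → M j / M (j - 1)` writes every element
of `M j` as `N (N ^ (-j - 1) x)` with `N ^ (-j - 1) x ∈ M (j + 2)`, modulo `M (j - 1)`. Hence
`M j ≤ N (M (j + 2)) ⊔ M (j - 1)`, and an upward induction on `j`, starting below the index
where `M` vanishes, absorbs the error term `M (j - 1) ≤ N (M (j + 1))`.
-/

namespace IsMonodromyFiltration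

variable {K V : Type*} [Field K] [AddCommGroup V] [Module K V]
  {N : V →ₗ[K] V} {M : ℤ → Submodule K V}

theorem monotone (hM : IsMonodromyFiltration N M) : Monotone M :=
  monotone_int_of_le_succ hM.1

theorem pow_apply_mem (hM : IsMonodromyFiltration N M) (m : ℕ) {i : ℤ} {x : V}
    (hx : x ∈ M i) : (N ^ m) x ∈ M (i - 2 * m) := by
  induction m with
  | zero => simpa using hx
  | succ m ih =>
    rw [pow_succ', Module.End.mul_apply]
    convert hM.2.2.2.1 _ (Submodule.mem_map_of_mem ih) using 2
    push_cast
    ring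

theorem le_map_sup (hM : IsMonodromyFiltration N M) {j : ℤ} (hj : j ≤ -1) :
    M j ≤ (M (j + 2)).map N ⊔ M (j - 1) := by
  obtain ⟨n, rfl⟩ : ∃ n : ℕ, j = -((n + 1 : ℕ) : ℤ) := ⟨(-j - 1).toNat, by omega⟩
  intro y hy
  obtain ⟨x, hx, hxy⟩ := ((hM.2.2.2.2 (n + 1) (by omega)).2.2) y hy
  have hNx : (N ^ (n + 1)) x ∈ (M (-((n + 1 : ℕ) : ℤ) + 2)).map N := by
    rw [pow_succ', Module.End.mul_apply]
    refine Submodule.mem_map_of_mem ?_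
    convert hM.pow_apply_mem n hx using 2
    push_cast
    ring
  rw [← sub_sub_cancel ((N ^ (n + 1)) x) y]
  exact sub_mem (Submodule.mem_sup_left hNx) (Submodule.mem_sup_right hxy)

theorem le_map (hM : IsMonodromyFiltration N M) {j : ℤ} (hj : j ≤ -1) :
    M j ≤ (M (j + 2)).map N := by
  obtain ⟨a, ha⟩ := hM.2.1
  obtain hja | haj := le_total j a
  · simp [ha j hja]
  induction j, haj using Int.leInduction with
  | base => simp [ha a le_rfl]
  | succ j _ ih =>
    calc M (j + 1) ≤ (M (j + 1 + 2)).map N ⊔ M (j + 1 - 1) := hM.le_map_sup hj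
      _ ≤ (M (j + 1 + 2)).map N := by
        refine sup_le le_rfl ?_
        rw [add_sub_cancel_right]
        exact (ih (by omega)).trans (Submodule.map_mono (hM.monotone (by omega)))

end IsMonodromyFiltration

theorem monodromyFiltration_map_eq_general {K V : Type*} [Field K] [AddCommGroup V] [Module K V]
    (N : V →ₗ[K] V)
    (M : ℤ → Submodule K V) (hM : IsMonodromyFiltration N M) :
    ∀ j : ℤ, j ≤ -1 → (M (j + 2)).map N = M j := fun j hj =>
  le_antisymm (by simpa using hM.2.2.2.1 (j + 2)) (hM.le_map hj)

/-- For a monodromy filtration of a nilpotent endomorphism, `N (M (j+2)) = M j` for all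
`j ≤ -1` (Deligne). -/
theorem monodromyFiltration_map_eq {K V : Type*} [Field K] [AddCommGroup V] [Module K V]
    [FiniteDimensional K V] (N : V →ₗ[K] V) (hN : IsNilpotent N)
    (M : ℤ → Submodule K V) (hM : IsMonodromyFiltration N M) :
    ∀ j : ℤ, j ≤ -1 → (M (j + 2)).map N = M j :=
  monodromyFiltration_map_eq_general N M hM
end

section
/- Let K be a field, V a finite-dimensional K-vector space, N : V → V a nilpotent K-linear endomorphism, and (M_j)_{j∈ℤ} a monodromy filtration for N. Then for every v ∈ V, if N(v) ∈ M_{-2} then v ∈ M_0; equivalently, the map V/M_0 → V/M_{-2} induced by N is injective. -/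
/-- For a monodromy filtration of a nilpotent endomorphism, the map
`V / M 0 → V / M (-2)` induced by `N` is injective: if `N v ∈ M (-2)` then `v ∈ M 0`
(Deligne). -/
theorem monodromyFiltration_injective_on_quotient {K V : Type*} [Field K] [AddCommGroup V]
    [Module K V] [FiniteDimensional K V] (N : V →ₗ[K] V) (hN : IsNilpotent N)
    (M : ℤ → Submodule K V) (hM : IsMonodromyFiltration N M) :
    ∀ v : V, N v ∈ M (-2) → v ∈ M 0 := by
  obtain ⟨hinc, ⟨a, ha⟩, ⟨b, hb⟩, hmap, hiso⟩ := hM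
  have mono : Monotone M := monotone_int_of_le_succ hinc
  -- N^k maps M i into M (i - 2k)
  have hpow : ∀ (k : ℕ) (i : ℤ) (x : V), x ∈ M i → (N ^ k) x ∈ M (i - 2 * k) := by
    intro k
    induction k with
    | zero => intro i x hx; simpa using hx
    | succ k ih =>
      intro i x hx
      have h1 : (N ^ (k + 1)) x = N ((N ^ k) x) := by
        rw [pow_succ']; rfl
      rw [h1]
      have h2 := hmap (i - 2 * k) ⟨(N ^ k) x, ih i x hx, rfl⟩
      have : i - 2 * k - 2 = i - 2 * (k + 1 : ℕ) := by push_cast; ring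
      rwa [this] at h2
  -- downward induction
  have key : ∀ (n : ℕ) (v : V), v ∈ M n → N v ∈ M (-2) → v ∈ M 0 := by
    intro n
    induction n with
    | zero => intro v hv _; exact hv
    | succ n ih =>
      intro v hv hNv
      have h1 := (hiso (n + 1) (by omega)).2.1 v (by exact_mod_cast hv)
      have h2 : (N ^ (n + 1)) v = (N ^ n) (N v) := by
        rw [pow_succ]; rfl
      have h3 : (N ^ n) (N v) ∈ M (-2 - 2 * n) := hpow n (-2) (N v) hNv
      have h4 : (N ^ (n + 1)) v ∈ M (-((n : ℤ) + 1) - 1) := by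
        rw [h2]; exact mono (by omega) h3
      have h5 := h1 (by push_cast; exact h4)
      push_cast at h5
      rw [add_sub_cancel_right] at h5
      exact ih v h5 hNv
  intro v hNv
  have hv : v ∈ M (max b 0).toNat := by
    rw [hb _ (by omega)]; trivial
  exact key _ v hv hNv
end

section
/- Let K be a field, V a finite-dimensional K-vector space, N : V → V a nilpotent K-linear endomorphism, and (M_j)_{j∈ℤ} a monodromy filtration for N. Then ker N ⊆ M_0. -/
/-- For a monodromy filtration of a nilpotent endomorphism, `ker N ⊆ M 0`. -/
theorem monodromyFiltration_ker_le {K V : Type*} [Field K] [AddCommGroup V] [Module K V]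
    [FiniteDimensional K V] (N : V →ₗ[K] V) (hN : IsNilpotent N)
    (M : ℤ → Submodule K V) (hM : IsMonodromyFiltration N M) :
    LinearMap.ker N ≤ M 0 := by
  obtain ⟨hmono, ha, ⟨b, hb⟩, hN2, hiso⟩ := hM
  intro x hx
  have hx0 : N x = 0 := hx
  -- key step: for j ≥ 1, x ∈ M j implies x ∈ M (j-1)
  have key : ∀ j : ℕ, x ∈ M (j : ℤ) → x ∈ M 0 := by
    intro j
    induction j with
    | zero => intro h; exact_mod_cast h
    | succ n ih =>
      intro h
      have h1 : 1 ≤ n + 1 := Nat.le_add_left 1 n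
      obtain ⟨_, hinj, _⟩ := hiso (n + 1) h1
      have hpow : (N ^ (n + 1)) x = 0 := by
        rw [pow_succ, Module.End.mul_apply, hx0, map_zero]
      have hx' : x ∈ M ((↑(n + 1) : ℤ) - 1) := by
        apply hinj x (by exact_mod_cast h)
        rw [hpow]; exact Submodule.zero_mem _
      apply ih
      have : ((↑(n + 1) : ℤ) - 1) = (n : ℤ) := by push_cast; ring
      rwa [this] at hx'
  -- x ∈ M b for large b, so x ∈ M (max b 0) with nat index
  have hb' : x ∈ M (max b 0) := by
    rw [hb _ (le_max_left _ _)]; trivial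
  have : x ∈ M ((max b 0).toNat : ℤ) := by
    rwa [Int.toNat_of_nonneg (le_max_right _ _)]
  exact key _ this
end

section
/- Let K be a field, V a finite-dimensional K-vector space, N : V → V a nilpotent K-linear endomorphism, and (M_j)_{j∈ℤ} a monodromy filtration for N. Then M_{-1} ⊆ range N. -/
/-! Each `y ∈ M (-k)`, `k ≥ 1`, is `N ^ k x` modulo `M (-k - 1)`, and `N ^ k x ∈ range N`; so
`M (-k) ≤ range N ⊔ M (-k - 1)`, and since `M` vanishes far enough down, induction upwards gives
`M (-1) ≤ range N`. -/

theorem le_of_forall_le_sup_sub_one {α : Type*} [SemilatticeSup α] {M : ℤ → α} {P : α} {a n : ℤ}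
    (hbase : ∀ j ≤ a, M j ≤ P) (hstep : ∀ j ≤ n, M j ≤ P ⊔ M (j - 1)) : M n ≤ P := by
  rcases le_or_gt n a with hna | han
  · exact hbase n hna
  have hind : ∀ j, a ≤ j → j ≤ n → M j ≤ P := by
    intro j haj
    induction j, haj using Int.leInduction with
    | base => exact fun _ => hbase a le_rfl
    | succ j _ ih =>
      intro hjn
      have hprev : M j ≤ P := ih (by omega)
      calc M (j + 1) ≤ P ⊔ M (j + 1 - 1) := hstep (j + 1) hjn
        _ = P ⊔ M j := by rw [add_sub_cancel_right]
        _ ≤ P := sup_le le_rfl hprev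
  exact hind n han.le le_rfl

theorem IsMonodromyFiltration.le_range_sup_sub_one {K V : Type*} [Field K] [AddCommGroup V]
    [Module K V] {N : V →ₗ[K] V} {M : ℤ → Submodule K V} (hM : IsMonodromyFiltration N M)
    {j : ℤ} (hj : j ≤ -1) : M j ≤ LinearMap.range N ⊔ M (j - 1) := by
  obtain ⟨k, rfl⟩ := Int.exists_eq_neg_ofNat (show j ≤ 0 by omega)
  obtain ⟨m, rfl⟩ : ∃ m, k = m + 1 := ⟨k - 1, by omega⟩
  intro y hy
  obtain ⟨x, -, hxy⟩ := (hM.2.2.2.2 (m + 1) (by omega)).2.2 y hy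
  have hNx : (N ^ (m + 1)) x ∈ LinearMap.range N := by
    rw [pow_succ', Module.End.mul_apply]
    exact LinearMap.mem_range_self N _
  rw [Submodule.mem_sup]
  exact ⟨_, hNx, _, neg_mem hxy, by abel⟩

theorem monodromyFiltration_le_range_general {K V : Type*} [Field K] [AddCommGroup V] [Module K V]
    (N : V →ₗ[K] V)
    (M : ℤ → Submodule K V) (hM : IsMonodromyFiltration N M) :
    M (-1) ≤ LinearMap.range N := by
  obtain ⟨a, hbot⟩ := hM.2.1
  exact le_of_forall_le_sup_sub_one (a := a) (fun j hj => (hbot j hj).trans_le bot_le)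
    (fun _ hj => hM.le_range_sup_sub_one hj)

/-- For a monodromy filtration of a nilpotent endomorphism, `M (-1) ⊆ range N`. -/
theorem monodromyFiltration_le_range {K V : Type*} [Field K] [AddCommGroup V] [Module K V]
    [FiniteDimensional K V] (N : V →ₗ[K] V) (hN : IsNilpotent N)
    (M : ℤ → Submodule K V) (hM : IsMonodromyFiltration N M) :
    M (-1) ≤ LinearMap.range N :=
  monodromyFiltration_le_range_general N M hM
end

section
/- Let K be a field, R a commutative K-algebra, and σ : R → R a K-algebra homomorphism such that R, regarded as an R-module via σ (i.e., with scalar action r · x = σ(r)x), is a free module of finite rank d with d ≥ 2. Let T be an R-module that is finite-dimensional as a K-vector space. If there is an isomorphism of R-modules between the base change R ⊗_{R,σ} T of T along σ and T itself, then T = 0. -/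
/-!
If `R` is free of rank `d` over itself via `σ`, then `R ⊗_{R,σ} T ≅ T^d` as `R`-modules, so over
`K` the base change has dimension `d · dim_K T`. Since `σ` is `K`-linear, an `R`-linear
isomorphism `R ⊗_{R,σ} T ≅ T` is `K`-linear, forcing `d · dim_K T = dim_K T`; as `d ≠ 1`,
`dim_K T = 0`.
-/

open TensorProduct

/-- `Twist R σ` is the ring `R` regarded as an `R`-algebra (hence an `R`-module) via the
ring endomorphism `σ : R → R`. -/
def Twist (R : Type*) [CommRing R] (σ : R →+* R) : Type _ := R

instance Twist.instCommRing (R : Type*) [CommRing R] (σ : R →+* R) :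
    CommRing (Twist R σ) := inferInstanceAs (CommRing R)

instance Twist.instAlgebra (R : Type*) [CommRing R] (σ : R →+* R) :
    Algebra R (Twist R σ) := (show R →+* Twist R σ from σ).toAlgebra

/-- Any `R`-module is a module over the ring `Twist R σ` (which is just `R`). -/
instance (priority := 50) Twist.instModule (R : Type*) [CommRing R] (σ : R →+* R)
    (T : Type*) [AddCommGroup T] [Module R T] : Module (Twist R σ) T :=
  inferInstanceAs (Module R T)

namespace Module

theorem finrank_tensorProduct_of_free_left {K R A T : Type*} [Field K] [CommRing R]
    [StrongRankCondition R] [Algebra K R] [AddCommGroup A] [Module R A] [Module K A]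
    [IsScalarTower K R A] [Module.Free R A] [Module.Finite R A] [AddCommGroup T] [Module R T]
    [Module K T] [IsScalarTower K R T] [FiniteDimensional K T] :
    finrank K (A ⊗[R] T) = finrank R A * finrank K T := by
  let e : A ⊗[R] T ≃ₗ[R] (Free.ChooseBasisIndex R A → T) :=
    TensorProduct.congr (Free.chooseBasis R A).repr (.refl R T) ≪≫ₗ finsuppScalarLeft R T _ ≪≫ₗ
      Finsupp.linearEquivFunOnFinite R T _
  rw [(e.restrictScalars K).finrank_eq, finrank_pi_fintype, Finset.sum_const, Finset.card_univ,
    ← finrank_eq_card_chooseBasisIndex, smul_eq_mul]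

theorem subsingleton_of_tensorProduct_linearEquiv {K R A T : Type*} [Field K]
    [CommRing R] [Algebra K R] [AddCommGroup A] [Module R A] [Module K A] [IsScalarTower K R A]
    [Module.Free R A] [Module.Finite R A] [AddCommGroup T] [Module R T] [Module K T]
    [IsScalarTower K R T] [FiniteDimensional K T] (hA : finrank R A ≠ 1)
    (e : A ⊗[R] T ≃ₗ[K] T) : Subsingleton T := by
  rcases subsingleton_or_nontrivial R with hR | hR
  · exact Module.subsingleton R T
  have hdim : finrank R A * finrank K T = 1 * finrank K T := by
    rw [← finrank_tensorProduct_of_free_left, e.finrank_eq, one_mul]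
  have hT : finrank K T = 0 := by
    by_contra hT
    exact hA (Nat.eq_of_mul_eq_mul_right (Nat.pos_of_ne_zero hT) hdim)
  exact finrank_zero_iff.mp hT

end Module

/-- If `σ : R → R` is a `K`-algebra endomorphism making `R` a free `R`-module of finite
rank `d ≥ 2` (via `σ`), and `T` is an `R`-module which is finite-dimensional over `K`
such that the base change `R ⊗_{R,σ} T` of `T` along `σ` is isomorphic to `T` as an
`R`-module, then `T = 0`. -/
theorem subsingleton_of_frobenius_baseChange_iso {K R T : Type*} [Field K] [CommRing R]
    [Algebra K R] [AddCommGroup T] [Module R T] [Module K T] [IsScalarTower K R T]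
    [FiniteDimensional K T] (σ : R →ₐ[K] R) (d : ℕ) (hd : 2 ≤ d)
    [Module.Free R (Twist R σ.toRingHom)] [Module.Finite R (Twist R σ.toRingHom)]
    (hrank : Module.finrank R (Twist R σ.toRingHom) = d)
    (hiso : Nonempty ((Twist R σ.toRingHom ⊗[R] T) ≃ₗ[Twist R σ.toRingHom] T)) :
    Subsingleton T := by
  obtain ⟨e⟩ := hiso
  let _ : Algebra K (Twist R σ.toRingHom) := inferInstanceAs (Algebra K R)
  have _ : IsScalarTower K R (Twist R σ.toRingHom) :=
    .of_algebraMap_eq fun k => (σ.commutes k).symm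
  have _ : IsScalarTower K (Twist R σ.toRingHom) T := inferInstanceAs (IsScalarTower K R T)
  exact Module.subsingleton_of_tensorProduct_linearEquiv (R := R) (by rw [hrank]; omega)
    (e.restrictScalars K)
end
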